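/- Let T = (T_{ij}) be an n×n operator matrix with T_{ij} ∈ B(H), and f, g nonnegative continuous functions on [0,∞) with f(t)g(t) = t. Then w(T) ≤ w(T'), where T' is the n×n complex matrix with entries t'_{ij} = ‖f²(|T_{ij}|)‖^{1/2} ‖g²(|T_{ij}*|)‖^{1/2}. -/

import Mathlib

/-- The numerical radius of an operator on a complex Hilbert space. -/
noncomputable def nr {H : Type*} [NormedAddCommGroup H] [InnerProductSpace ℂ H]
    (T : H →L[ℂ] H) : ℝ :=
  sSup {r : ℝ | ∃ x : H, ‖x‖ = 1 ∧ r = ‖(inner ℂ (T x) x : ℂ)‖}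

/-- `|T| = (T*T)^{1/2}` via the continuous functional calculus. -/
noncomputable def absOp {H : Type*} [NormedAddCommGroup H] [InnerProductSpace ℂ H]
    [CompleteSpace H] (X : H →L[ℂ] H) : H →L[ℂ] H :=
  cfc Real.sqrt (star X * X)

/-! Each entry satisfies `‖T_ij‖ ≤ t'_ij`: `‖T_ij‖` lies in the spectrum of `|T_ij|` and of
`|T_ij*|`, so by spectral mapping `f(‖T_ij‖)² ≤ ‖f²(|T_ij|)‖` and `g(‖T_ij‖)² ≤ ‖g²(|T_ij*|)‖`,
while `‖T_ij‖ = f(‖T_ij‖) g(‖T_ij‖)`. Hence for a unit vector `x`,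
`|⟨Tx, x⟩| ≤ ∑ ‖T_ij‖ ‖x_j‖ ‖x_i‖ ≤ ∑ t'_ij ‖x_j‖ ‖x_i‖ = ⟨T'y, y⟩` for the unit vector
`y = (‖x_i‖)_i`, the last inner product being real and nonnegative since `T'` has nonnegative
entries. -/

open Finset

section NumericalRadius

variable {H : Type*} [NormedAddCommGroup H] [InnerProductSpace ℂ H]

lemma nr_bddAbove (T : H →L[ℂ] H) :
    BddAbove {r : ℝ | ∃ x : H, ‖x‖ = 1 ∧ r = ‖(inner ℂ (T x) x : ℂ)‖} := by
  refine ⟨‖T‖, ?_⟩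
  rintro r ⟨x, hx, rfl⟩
  calc ‖(inner ℂ (T x) x : ℂ)‖ ≤ ‖T x‖ * ‖x‖ := norm_inner_le_norm _ _
    _ ≤ ‖T‖ * ‖x‖ * ‖x‖ := by gcongr; exact T.le_opNorm x
    _ = ‖T‖ := by rw [hx]; ring

lemma norm_inner_le_nr (T : H →L[ℂ] H) {x : H} (hx : ‖x‖ = 1) :
    ‖(inner ℂ (T x) x : ℂ)‖ ≤ nr T :=
  le_csSup (nr_bddAbove T) ⟨x, hx, rfl⟩

lemma nr_nonneg (T : H →L[ℂ] H) : 0 ≤ nr T :=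
  Real.sSup_nonneg (by rintro _ ⟨x, -, rfl⟩; positivity)

lemma nr_le_of_forall_norm_inner_le (T : H →L[ℂ] H) {c : ℝ} (hc : 0 ≤ c)
    (h : ∀ x : H, ‖x‖ = 1 → ‖(inner ℂ (T x) x : ℂ)‖ ≤ c) : nr T ≤ c :=
  Real.sSup_le (by rintro r ⟨x, hx, rfl⟩; exact h x hx) hc

end NumericalRadius

section AbsOp

variable {H : Type*} [NormedAddCommGroup H] [InnerProductSpace ℂ H] [CompleteSpace H]

lemma norm_mem_spectrum_absOp [Nontrivial H] (a : H →L[ℂ] H) :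
    ‖a‖ ∈ spectrum ℝ (absOp a) := by
  rw [absOp, cfc_map_spectrum Real.sqrt (star a * a)]
  refine ⟨‖star a * a‖, CStarAlgebra.norm_mem_spectrum_of_nonneg (star_mul_self_nonneg a), ?_⟩
  rw [CStarRing.norm_star_mul_self, Real.sqrt_mul_self (norm_nonneg a)]

lemma abs_le_sqrt_norm_cfc_sq_absOp [Nontrivial H] (h : ℝ → ℝ) (hh : Continuous h)
    (a : H →L[ℂ] H) :
    |h ‖a‖| ≤ Real.sqrt ‖cfc (fun t => h t ^ 2) (absOp a)‖ := by
  have hmem : h ‖a‖ ^ 2 ∈ spectrum ℝ (cfc (fun t => h t ^ 2) (absOp a)) := by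
    rw [cfc_map_spectrum (fun t => h t ^ 2) (absOp a) (cfc_predicate _ _)]
    exact ⟨‖a‖, norm_mem_spectrum_absOp a, rfl⟩
  have := spectrum.norm_le_norm_of_mem hmem
  rw [← Real.sqrt_sq_eq_abs]
  exact Real.sqrt_le_sqrt (by simpa using this)

lemma norm_le_sqrt_norm_cfc_mul_sqrt_norm_cfc (f g : ℝ → ℝ) (hf : Continuous f)
    (hg : Continuous g) (a : H →L[ℂ] H) (hfg : f ‖a‖ * g ‖a‖ = ‖a‖) :
    ‖a‖ ≤ Real.sqrt ‖cfc (fun t => f t ^ 2) (absOp a)‖ *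
      Real.sqrt ‖cfc (fun t => g t ^ 2) (absOp (star a))‖ := by
  rcases subsingleton_or_nontrivial H with _ | _
  · rw [Subsingleton.elim a 0, norm_zero]
    positivity
  have hg' := abs_le_sqrt_norm_cfc_sq_absOp g hg (star a)
  rw [norm_star] at hg'
  calc ‖a‖ = |f ‖a‖| * |g ‖a‖| := by rw [← abs_mul, hfg, abs_norm]
    _ ≤ _ := mul_le_mul (abs_le_sqrt_norm_cfc_sq_absOp f hf a) hg' (abs_nonneg _)
        (Real.sqrt_nonneg _)

end AbsOp

lemma norm_toLp_ofReal_norm {ι : Type*} [Fintype ι] {E : ι → Type*}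
    [∀ i, NormedAddCommGroup (E i)] (x : PiLp 2 E) :
    ‖(WithLp.toLp 2 fun i => ((‖x i‖ : ℝ) : ℂ) : EuclideanSpace ℂ ι)‖ = ‖x‖ := by
  simp [EuclideanSpace.norm_eq, PiLp.norm_eq_of_L2]

section OperatorMatrix

variable {ι : Type*} [Fintype ι] {H : Type*} [NormedAddCommGroup H] [InnerProductSpace ℂ H]

lemma norm_inner_le_sum_opMatrix (M : ι → ι → H →L[ℂ] H)
    (T : (PiLp 2 fun _ : ι => H) →L[ℂ] (PiLp 2 fun _ : ι => H))
    (hT : ∀ x, ∀ i, T x i = ∑ j, M i j (x j)) (x : PiLp 2 fun _ : ι => H) :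
    ‖(inner ℂ (T x) x : ℂ)‖ ≤ ∑ i, ∑ j, ‖M i j‖ * ‖x j‖ * ‖x i‖ := by
  rw [PiLp.inner_apply]
  refine (norm_sum_le _ _).trans (sum_le_sum fun i _ => ?_)
  rw [hT, sum_inner]
  refine (norm_sum_le _ _).trans (sum_le_sum fun j _ => ?_)
  calc ‖(inner ℂ (M i j (x j)) (x i) : ℂ)‖ ≤ ‖M i j (x j)‖ * ‖x i‖ := norm_inner_le_norm _ _
    _ ≤ ‖M i j‖ * ‖x j‖ * ‖x i‖ := by gcongr; exact (M i j).le_opNorm _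

lemma inner_toEuclideanCLM_ofReal [DecidableEq ι] (a : ι → ι → ℝ) (r : ι → ℝ) :
    inner ℂ (Matrix.toEuclideanCLM (𝕜 := ℂ) (Matrix.of fun i j => (a i j : ℂ))
        (WithLp.toLp 2 fun i => (r i : ℂ))) (WithLp.toLp 2 fun i => (r i : ℂ)) =
      ((∑ i, ∑ j, a i j * r j * r i : ℝ) : ℂ) := by
  simp only [Matrix.toEuclideanCLM_toLp, PiLp.inner_apply, RCLike.inner_apply, Matrix.mulVec,
    dotProduct, Matrix.of_apply, map_sum, map_mul, Complex.conj_ofReal, mul_sum]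
  push_cast
  exact sum_congr rfl fun i _ => sum_congr rfl fun j _ => by ring

lemma nr_le_nr_toEuclideanCLM_of_norm_le [DecidableEq ι] (M : ι → ι → H →L[ℂ] H)
    (T : (PiLp 2 fun _ : ι => H) →L[ℂ] (PiLp 2 fun _ : ι => H))
    (hT : ∀ x, ∀ i, T x i = ∑ j, M i j (x j)) {a : ι → ι → ℝ} (hM : ∀ i j, ‖M i j‖ ≤ a i j) :
    nr T ≤ nr (Matrix.toEuclideanCLM (𝕜 := ℂ) (Matrix.of fun i j => (a i j : ℂ))) := by
  refine nr_le_of_forall_norm_inner_le T (nr_nonneg _) fun x hx => ?_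
  have ha : ∀ i j, 0 ≤ a i j := fun i j => (norm_nonneg _).trans (hM i j)
  calc ‖(inner ℂ (T x) x : ℂ)‖ ≤ ∑ i, ∑ j, ‖M i j‖ * ‖x j‖ * ‖x i‖ :=
        norm_inner_le_sum_opMatrix M T hT x
    _ ≤ ∑ i, ∑ j, a i j * ‖x j‖ * ‖x i‖ := by gcongr with i _ j _; exact hM i j
    _ = ‖inner ℂ (Matrix.toEuclideanCLM (𝕜 := ℂ) (Matrix.of fun i j => (a i j : ℂ))
          (WithLp.toLp 2 fun i => ((‖x i‖ : ℝ) : ℂ)))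
          (WithLp.toLp 2 fun i => ((‖x i‖ : ℝ) : ℂ))‖ := by
        rw [inner_toEuclideanCLM_ofReal, Complex.norm_real, Real.norm_of_nonneg
          (sum_nonneg fun i _ => sum_nonneg fun j _ => by have := ha i j; positivity)]
    _ ≤ _ := norm_inner_le_nr _ ((norm_toLp_ofReal_norm x).trans hx)

end OperatorMatrix

theorem nr_opMatrix_le_general (n : ℕ) {H : Type*} [NormedAddCommGroup H]
    [InnerProductSpace ℂ H] [CompleteSpace H]
    (M : Fin n → Fin n → (H →L[ℂ] H))
    (T : (PiLp 2 fun _ : Fin n => H) →L[ℂ] (PiLp 2 fun _ : Fin n => H))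
    (hT : ∀ x, ∀ i, T x i = ∑ j, M i j (x j))
    (f g : ℝ → ℝ) (hf : Continuous f) (hg : Continuous g)
    (hfg : ∀ t, 0 ≤ t → f t * g t = t) :
    nr T ≤ nr (Matrix.toEuclideanCLM (𝕜 := ℂ) (Matrix.of fun i j =>
      ((Real.sqrt ‖cfc (fun t => f t ^ 2) (absOp (M i j))‖ *
        Real.sqrt ‖cfc (fun t => g t ^ 2) (absOp (star (M i j)))‖ : ℝ) : ℂ))) :=
  nr_le_nr_toEuclideanCLM_of_norm_le M T hT fun i j =>
    norm_le_sqrt_norm_cfc_mul_sqrt_norm_cfc f g hf hg (M i j) (hfg _ (norm_nonneg _))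

/-- If `T` is the `n × n` operator matrix with entries `M i j` acting on `⊕ⁿ H`, and
`f, g ≥ 0` continuous with `f(t)g(t) = t` on `[0,∞)`, then `w(T) ≤ w(T')` with
`t'_{ij} = ‖f²(|M i j|)‖^{1/2} ‖g²(|M i j*|)‖^{1/2}`. -/
theorem nr_opMatrix_le (n : ℕ) {H : Type*} [NormedAddCommGroup H]
    [InnerProductSpace ℂ H] [CompleteSpace H]
    (M : Fin n → Fin n → (H →L[ℂ] H))
    (T : (PiLp 2 fun _ : Fin n => H) →L[ℂ] (PiLp 2 fun _ : Fin n => H))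
    (hT : ∀ x, ∀ i, T x i = ∑ j, M i j (x j))
    (f g : ℝ → ℝ) (hf : Continuous f) (hg : Continuous g)
    (hf0 : ∀ t, 0 ≤ t → 0 ≤ f t) (hg0 : ∀ t, 0 ≤ t → 0 ≤ g t)
    (hfg : ∀ t, 0 ≤ t → f t * g t = t) :
    nr T ≤ nr (Matrix.toEuclideanCLM (𝕜 := ℂ) (Matrix.of fun i j =>
      ((Real.sqrt ‖cfc (fun t => f t ^ 2) (absOp (M i j))‖ *
        Real.sqrt ‖cfc (fun t => g t ^ 2) (absOp (star (M i j)))‖ : ℝ) : ℂ))) :=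
  nr_opMatrix_le_general n M T hT f g hf hg hfg
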